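/- If Phi is an N-by-K real matrix with 2K0 <= min(N,K) and every 2K0-by-2K0 submatrix of Phi has full rank, then the eluder dimension of the sparse linear class Q0 = { Phi theta : ||theta||_0 <= K0 } equals 2K0. -/

import Mathlib

/-- `z` is independent of `Z'` with respect to the function class `Q`:
there exist two functions in `Q` agreeing on `Z'` but differing at `z`. -/
def IsIndep {Z : Type*} (Q : Set (Z → ℝ)) (z : Z) (Z' : Set Z) : Prop :=
  ∃ f ∈ Q, ∃ g ∈ Q, (∀ w ∈ Z', f w = g w) ∧ f z ≠ g z

/-- A list of elements of `Z` such that every element is independent of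
its predecessors with respect to `Q`. -/
def EluderSeq {Z : Type*} (Q : Set (Z → ℝ)) (l : List Z) : Prop :=
  ∀ i : Fin l.length,
    IsIndep Q (l.get i) {w | ∃ j : Fin l.length, j < i ∧ l.get j = w}

/-- The eluder dimension of `Q`: the length of the longest sequence of
elements of `Z` each independent of its predecessors. -/
noncomputable def eluderDim {Z : Type*} (Q : Set (Z → ℝ)) : ℕ∞ :=
  sSup ((fun l : List Z => (l.length : ℕ∞)) '' {l | EluderSeq Q l})

/-- The class of functions on `Fin N` given by `K0`-sparse linear combinations
of the columns of `Φ`, i.e. `y ↦ Φ(y)ᵀ θ` with `‖θ‖₀ ≤ K0`. -/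
def SparseClass {N K : ℕ} (Φ : Matrix (Fin N) (Fin K) ℝ) (K0 : ℕ) :
    Set (Fin N → ℝ) :=
  {f | ∃ θ : Fin K → ℝ,
    (Finset.univ.filter fun i => θ i ≠ 0).card ≤ K0 ∧
    f = fun y => ∑ i, Φ y i * θ i}

/-- `v` is linearly `l`-independent of the set of vectors `S`: there is an index
set `I` of cardinality `l` such that the restriction of `v` to `I` is not in the
span of the restrictions of the elements of `S` to `I`. -/
def LinLIndepOf {K : ℕ} (l : ℕ) (v : Fin K → ℝ) (S : Set (Fin K → ℝ)) : Prop :=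
  ∃ I : Finset (Fin K), I.card = l ∧
    (fun i : {x // x ∈ I} => v i.1) ∉
      Submodule.span ℝ ((fun w : Fin K → ℝ => fun i : {x // x ∈ I} => w i.1) '' S)

/-- A sequence (list) of rows of `Φ` such that every row is linearly
`l`-independent of its predecessors. -/
def LRankSeq {N K : ℕ} (Φ : Matrix (Fin N) (Fin K) ℝ) (l : ℕ)
    (s : List (Fin N)) : Prop :=
  ∀ i : Fin s.length,
    LinLIndepOf l (Φ (s.get i)) {w | ∃ j : Fin s.length, j < i ∧ w = Φ (s.get j)}

/-- The `l`-rank of `Φ`: the length of the longest sequence of rows of `Φ`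
such that every element is linearly `l`-independent of its predecessors. -/
noncomputable def lRank {N K : ℕ} (Φ : Matrix (Fin N) (Fin K) ℝ) (l : ℕ) : ℕ∞ :=
  sSup ((fun s : List (Fin N) => (s.length : ℕ∞)) '' {s | LRankSeq Φ l s})

/-- `Φ` is `l`-full-rank: every `l × l` submatrix has full rank, i.e. its
rows are linearly independent. -/
def LFullRank {N K : ℕ} (Φ : Matrix (Fin N) (Fin K) ℝ) (l : ℕ) : Prop :=
  ∀ (I : Finset (Fin N)) (J : Finset (Fin K)), I.card = l → J.card = l →
    LinearIndependent ℝ (fun i : {x // x ∈ I} => fun j : {x // x ∈ J} => Φ i.1 j.1)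


/-!
Two members of the class differ by `Φ *ᵥ θ` with `‖θ‖₀ ≤ 2 K0`. Since every `2 K0 × 2 K0`
submatrix of `Φ` is invertible, such a vector is determined by its values on any `2 K0` rows,
and it can take arbitrary values there. The first fact says that two members agreeing on
`2 K0` points are equal, so no eluder sequence is longer than `2 K0`. The second, applied to
the indicator of one of `2 K0` rows and with `θ` split into two `K0`-sparse halves, makes every
one of these rows independent of the others.
-/

open Finset Matrix

local notation "‖" θ "‖₀" => Finset.card (Finset.filter (fun i => θ i ≠ 0) Finset.univ)

section Eluder

variable {Z : Type*} {Q : Set (Z → ℝ)} {l : List Z}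

theorem EluderSeq.nodup (hl : EluderSeq Q l) : l.Nodup := by
  rw [List.nodup_iff_injective_get]
  intro a b hab
  by_contra hne
  wlog hlt : a < b generalizing a b
  · exact this hab.symm (Ne.symm hne) (lt_of_le_of_ne (not_lt.mp hlt) (Ne.symm hne))
  obtain ⟨f, -, g, -, hfg, hfg_ne⟩ := hl b
  exact hfg_ne (hfg _ ⟨a, hlt, hab⟩)

theorem EluderSeq.length_le {n : ℕ}
    (hdet : ∀ f ∈ Q, ∀ g ∈ Q, ∀ I : Finset Z, I.card = n → Set.EqOn f g I → f = g)
    (hl : EluderSeq Q l) : l.length ≤ n := by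
  classical
  by_contra! hlen
  obtain ⟨f, hf, g, hg, hfg, hfg_ne⟩ := hl ⟨n, hlen⟩
  refine hfg_ne (congr_fun (hdet f hf g hg (l.take n).toFinset ?_ ?_) _)
  · rw [List.toFinset_card_of_nodup (hl.nodup.sublist (List.take_sublist _ _))]
    simp only [List.length_take]
    omega
  · intro w hw
    obtain ⟨j, hj, rfl⟩ := List.mem_take_iff_getElem.mp (List.mem_toFinset.mp hw)
    exact hfg _ ⟨⟨j, by omega⟩, by simp only [Fin.mk_lt_mk]; omega, rfl⟩

theorem eluderSeq_of_nodup (hl : l.Nodup)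
    (hsep : ∀ z ∈ l, ∃ f ∈ Q, ∃ g ∈ Q, (∀ w ∈ l, w ≠ z → f w = g w) ∧ f z ≠ g z) :
    EluderSeq Q l := by
  intro i
  obtain ⟨f, hf, g, hg, hfg, hfg_ne⟩ := hsep _ (List.get_mem l i)
  refine ⟨f, hf, g, hg, ?_, hfg_ne⟩
  rintro _ ⟨j, hji, rfl⟩
  exact hfg _ (List.get_mem l j) fun h => hji.ne (List.nodup_iff_injective_get.mp hl h)

theorem eluderDim_eq_of_forall_length_le {n : ℕ} (hle : ∀ l, EluderSeq Q l → l.length ≤ n)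
    (hl : EluderSeq Q l) (hlen : l.length = n) : eluderDim Q = n :=
  le_antisymm (sSup_le <| by rintro _ ⟨l', hl', rfl⟩; exact Nat.cast_le.mpr (hle l' hl'))
    (le_sSup ⟨l, hl, congrArg Nat.cast hlen⟩)

end Eluder

section Sparse

variable {ι : Type*} [Fintype ι]

theorem card_support_sub_le (θ₁ θ₂ : ι → ℝ) : ‖θ₁ - θ₂‖₀ ≤ ‖θ₁‖₀ + ‖θ₂‖₀ := by
  classical
  refine (card_le_card fun i hi => ?_).trans (card_union_le _ _)
  contrapose! hi
  simp_all

theorem exists_sub_eq_of_card_support_le_add {θ : ι → ℝ} {a b : ℕ}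
    (hθ : ‖θ‖₀ ≤ a + b) : ∃ θ₁ θ₂ : ι → ℝ, ‖θ₁‖₀ ≤ a ∧ ‖θ₂‖₀ ≤ b ∧ θ₁ - θ₂ = θ := by
  classical
  set S := univ.filter fun i => θ i ≠ 0
  obtain ⟨S₁, hS₁, hcard⟩ := exists_subset_card_eq (min_le_right a S.card)
  refine ⟨fun i => if i ∈ S₁ then θ i else 0, fun i => if i ∈ S₁ then 0 else -θ i, ?_, ?_, ?_⟩
  · refine (card_le_card fun i hi => ?_).trans (hcard.trans_le (min_le_left _ _))
    by_contra h
    simp [h] at hi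
  · calc _ ≤ (S \ S₁).card := card_le_card fun i hi => by
          by_cases h : i ∈ S₁ <;> simp_all [S]
      _ = S.card - S₁.card := card_sdiff_of_subset hS₁
      _ ≤ b := by omega
  · ext i
    simp only [Pi.sub_apply]
    split_ifs <;> simp

end Sparse

theorem Matrix.mulVec_bijective_of_linearIndependent_rows {m n R : Type*} [Field R] [Fintype m]
    [Fintype n] {A : Matrix m n R} (hA : LinearIndependent R A.row)
    (hcard : Fintype.card m = Fintype.card n) : Function.Bijective A.mulVec := by
  have hsurj : Function.Surjective A.mulVecLin := by
    rw [← LinearMap.range_eq_top]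
    apply Submodule.eq_top_of_finrank_eq
    rw [← Matrix.rank, hA.rank_matrix, Module.finrank_fintype_fun_eq_card]
  exact ⟨(LinearMap.injective_iff_surjective_of_finrank_eq_finrank (by simp [hcard])).mpr hsurj,
    hsurj⟩

theorem Matrix.submatrix_mulVec_of_support_subset {m m' n R : Type*} [Fintype n]
    [NonUnitalNonAssocSemiring R] (A : Matrix m n R) (r : m' → m) {J : Finset n} {θ : n → R}
    (hθ : Function.support θ ⊆ J) :
    A.submatrix r ((↑) : J → n) *ᵥ (fun j => θ j) = (A *ᵥ θ) ∘ r := by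
  funext i
  simp only [mulVec, dotProduct, submatrix_apply, Function.comp_apply]
  rw [Finset.sum_coe_sort J (fun j => A (r i) j * θ j)]
  exact Finset.sum_subset (subset_univ J) fun j _ hj => by
    rw [Function.notMem_support.mp (mt (@hθ j) hj), mul_zero]

namespace LFullRank

variable {N K n : ℕ} {Φ : Matrix (Fin N) (Fin K) ℝ} {I : Finset (Fin N)}

theorem mulVec_bijective (hΦ : LFullRank Φ n) (hI : I.card = n) {J : Finset (Fin K)}
    (hJ : J.card = n) :
    Function.Bijective (Φ.submatrix ((↑) : I → Fin N) ((↑) : J → Fin K)).mulVec :=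
  mulVec_bijective_of_linearIndependent_rows (hΦ I J hI hJ) (by simp [hI, hJ])

theorem eq_zero_of_mulVec_eqOn_zero (hΦ : LFullRank Φ n) (hn : n ≤ K) (hI : I.card = n)
    {θ : Fin K → ℝ} (hθ : ‖θ‖₀ ≤ n) (hzero : ∀ i ∈ I, (Φ *ᵥ θ) i = 0) : θ = 0 := by
  obtain ⟨J, hSJ, hJ⟩ := exists_superset_card_eq hθ (by rwa [Fintype.card_fin])
  have hsupp : Function.support θ ⊆ J := fun j hj => hSJ (by simpa using hj)
  have hθJ : (fun j : J => θ j) = 0 := (hΦ.mulVec_bijective hI hJ).injective <| by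
    rw [submatrix_mulVec_of_support_subset _ _ hsupp, mulVec_zero]
    exact funext fun i => hzero i i.2
  funext j
  by_cases hj : j ∈ J
  · exact congr_fun hθJ ⟨j, hj⟩
  · exact Function.notMem_support.mp (mt (@hsupp j) hj)

theorem exists_mulVec_eqOn (hΦ : LFullRank Φ n) (hn : n ≤ K) (hI : I.card = n)
    (t : Fin N → ℝ) : ∃ θ : Fin K → ℝ, ‖θ‖₀ ≤ n ∧ ∀ i ∈ I, (Φ *ᵥ θ) i = t i := by
  classical
  obtain ⟨J, -, hJ⟩ := Finset.exists_subset_card_eq (s := (univ : Finset (Fin K))) (n := n)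
    (by rwa [card_univ, Fintype.card_fin])
  obtain ⟨φ, hφ⟩ := (hΦ.mulVec_bijective hI hJ).surjective fun i => t i
  let θ : Fin K → ℝ := fun j => if h : j ∈ J then φ ⟨j, h⟩ else 0
  have hsupp : Function.support θ ⊆ J := fun j hj => by
    by_contra h
    exact hj (dif_neg h)
  refine ⟨θ, (card_le_card fun j hj => hsupp (by simpa using hj)).trans hJ.le, fun i hi => ?_⟩
  have hθφ : (fun j : J => θ j) = φ := funext fun j => dif_pos j.2
  have := submatrix_mulVec_of_support_subset Φ ((↑) : I → Fin N) hsupp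
  rw [hθφ, hφ] at this
  exact (congr_fun this ⟨i, hi⟩).symm

variable {K0 : ℕ}

theorem sparseClass_eq_of_eqOn (hΦ : LFullRank Φ (2 * K0)) (hK : 2 * K0 ≤ K)
    (hI : I.card = 2 * K0) {f g : Fin N → ℝ} (hf : f ∈ SparseClass Φ K0)
    (hg : g ∈ SparseClass Φ K0) (hfg : Set.EqOn f g I) : f = g := by
  obtain ⟨θ₁, hθ₁, rfl⟩ := hf
  obtain ⟨θ₂, hθ₂, rfl⟩ := hg
  have h : θ₁ - θ₂ = 0 :=
    hΦ.eq_zero_of_mulVec_eqOn_zero hK hI ((card_support_sub_le θ₁ θ₂).trans (by omega))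
      fun i hi => by rw [mulVec_sub, Pi.sub_apply, sub_eq_zero]; exact hfg hi
  rw [sub_eq_zero.mp h]

theorem exists_sparseClass_separating (hΦ : LFullRank Φ (2 * K0)) (hK : 2 * K0 ≤ K)
    (hI : I.card = 2 * K0) {z : Fin N} (hz : z ∈ I) :
    ∃ f ∈ SparseClass Φ K0, ∃ g ∈ SparseClass Φ K0, (∀ w ∈ I, w ≠ z → f w = g w) ∧ f z ≠ g z := by
  obtain ⟨θ, hθ, hθz⟩ := hΦ.exists_mulVec_eqOn hK hI (Pi.single z 1 : Fin N → ℝ)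
  obtain ⟨θ₁, θ₂, hθ₁, hθ₂, rfl⟩ :=
    exists_sub_eq_of_card_support_le_add (a := K0) (b := K0) (hθ.trans (by omega))
  have hdiff : ∀ w ∈ I, (Φ *ᵥ θ₁) w - (Φ *ᵥ θ₂) w = (Pi.single z 1 : Fin N → ℝ) w :=
    fun w hw => by rw [← hθz w hw, mulVec_sub, Pi.sub_apply]
  refine ⟨Φ *ᵥ θ₁, ⟨θ₁, hθ₁, rfl⟩, Φ *ᵥ θ₂, ⟨θ₂, hθ₂, rfl⟩, fun w hw hwz => ?_, fun h => ?_⟩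
  · simpa [Pi.single_eq_of_ne hwz, sub_eq_zero] using hdiff w hw
  · simpa [h] using hdiff z hz

end LFullRank

theorem eluderDim_sparseClass_eq {N K K0 : ℕ} (Φ : Matrix (Fin N) (Fin K) ℝ)
    (h : 2 * K0 ≤ min N K) (hfull : LFullRank Φ (2 * K0)) :
    eluderDim (SparseClass Φ K0) = ((2 * K0 : ℕ) : ℕ∞) := by
  obtain ⟨hN, hK⟩ := le_min_iff.mp h
  obtain ⟨I, -, hI⟩ := Finset.exists_subset_card_eq (s := (univ : Finset (Fin N))) (n := 2 * K0)
    (by rwa [card_univ, Fintype.card_fin])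
  have hI_eluder : EluderSeq (SparseClass Φ K0) I.toList :=
    eluderSeq_of_nodup I.nodup_toList fun z hz => by
      simpa only [mem_toList] using hfull.exists_sparseClass_separating hK hI (mem_toList.mp hz)
  exact eluderDim_eq_of_forall_length_le
    (fun l hl => hl.length_le fun f hf g hg J hJ => hfull.sparseClass_eq_of_eqOn hK hJ hf hg)
    hI_eluder (by rw [length_toList, hI])
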